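/- Let d ≥ 2 be an integer. There exists δ₀ > 0, depending only on d, with the following property: for every δ ∈ (0,δ₀), if L = V + a and L' = V' + a' are lines in ℝ^d written in standard form (V, V' ∈ G(d,1), a ∈ V^⊥, a' ∈ V'^⊥) satisfying ‖P_V − P_{V'}‖ ≤ δ and |a − a'| ≥ 4δ, then any points x ∈ L ∩ B(0,1) and x' ∈ L' ∩ B(0,1) satisfy |x − x'| ≥ δ. -/

import Mathlib

open Set Filter Metric Bornology Pointwise

noncomputable section

/-- `coverNum X δ` is `N_δ(X)`: the smallest number of sets of diameter at most `δ`
needed to cover `X`. -/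
def coverNum {α : Type*} [PseudoMetricSpace α] (X : Set α) (δ : ℝ) : ℕ :=
  sInf {n : ℕ | ∃ c : Fin n → Set α, (∀ i, Metric.diam (c i) ≤ δ) ∧ X ⊆ ⋃ i, c i}

/-- The upper box dimension: `limsup_{δ → 0⁺} log N_δ(X) / (- log δ)`. -/
def ubDim {α : Type*} [PseudoMetricSpace α] (X : Set α) : ℝ :=
  Filter.limsup (fun δ : ℝ => Real.log (coverNum X δ) / -Real.log δ) (nhdsWithin 0 (Set.Ioi 0))

/-- The lower box dimension: `liminf_{δ → 0⁺} log N_δ(X) / (- log δ)`. -/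
def lbDim {α : Type*} [PseudoMetricSpace α] (X : Set α) : ℝ :=
  Filter.liminf (fun δ : ℝ => Real.log (coverNum X δ) / -Real.log δ) (nhdsWithin 0 (Set.Ioi 0))

/-- The packing dimension: the infimum over countable decompositions of `X` into non-empty
bounded pieces of the supremum of the upper box dimensions of the pieces. -/
def packDim {α : Type*} [PseudoMetricSpace α] (X : Set α) : ℝ :=
  sInf { r : ℝ | ∃ F : ℕ → Set α, (X ⊆ ⋃ i, F i) ∧
    (∀ i, (F i).Nonempty ∧ Bornology.IsBounded (F i)) ∧ r = ⨆ i, ubDim (F i) }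

/-- The orthogonal projection onto a subspace `V` of `ℝ^d`, as an operator `ℝ^d → ℝ^d`. -/
def projL {d : ℕ} (V : Submodule ℝ (EuclideanSpace ℝ (Fin d))) :
    EuclideanSpace ℝ (Fin d) →L[ℝ] EuclideanSpace ℝ (Fin d) :=
  V.subtypeL.comp (V.orthogonalProjection)

/-- A line in `ℝ^d`, in standard form: a direction `V ∈ G(d,1)` together with a translation
`a ∈ V^⊥`.  This is the affine Grassmannian `A(d,1)`. -/
structure AffLine (d : ℕ) where
  dir : Submodule ℝ (EuclideanSpace ℝ (Fin d))
  finrank_dir : Module.finrank ℝ dir = 1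
  pt : EuclideanSpace ℝ (Fin d)
  pt_mem : pt ∈ dirᗮ

/-- The line `V + a` as a subset of `ℝ^d`. -/
def AffLine.carrier {d : ℕ} (L : AffLine d) : Set (EuclideanSpace ℝ (Fin d)) :=
  {x | x - L.pt ∈ L.dir}

/-- The metric `d₁(V + a, V' + a') = ‖P_V - P_{V'}‖ + |a - a'|` on `A(d,1)`. -/
instance {d : ℕ} : PseudoMetricSpace (AffLine d) where
  dist L L' := ‖projL L.dir - projL L'.dir‖ + dist L.pt L'.pt
  dist_self L := by
    show ‖projL L.dir - projL L.dir‖ + dist L.pt L.pt = 0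
    rw [sub_self, norm_zero, dist_self, add_zero]
  dist_comm L L' := by
    show ‖projL L.dir - projL L'.dir‖ + dist L.pt L'.pt
      = ‖projL L'.dir - projL L.dir‖ + dist L'.pt L.pt
    rw [norm_sub_rev, dist_comm]
  dist_triangle L L' L'' := by
    show ‖projL L.dir - projL L''.dir‖ + dist L.pt L''.pt
      ≤ (‖projL L.dir - projL L'.dir‖ + dist L.pt L'.pt)
        + (‖projL L'.dir - projL L''.dir‖ + dist L'.pt L''.pt)
    have h1 : ‖projL L.dir - projL L''.dir‖ ≤
        ‖projL L.dir - projL L'.dir‖ + ‖projL L'.dir - projL L''.dir‖ :=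
      norm_sub_le_norm_sub_add_norm_sub _ _ _
    have h2 := dist_triangle L.pt L'.pt L''.pt
    linarith

end

/-! The translation of a line in standard form is the component of any of its points orthogonal
to the direction: `a = x - P_V x`. Hence `a - a' = P_{V^⊥} (x - x') - (P_V - P_{V'}) x'`, so
`|a - a'| ≤ |x - x'| + ‖P_V - P_{V'}‖ |x'|`. For `|x'| ≤ 1` this gives `|x - x'| ≥ 3δ` for
every `δ > 0`, so any `δ₀` works. -/

namespace Submodule

variable {𝕜 E : Type*} [RCLike 𝕜] [NormedAddCommGroup E] [InnerProductSpace 𝕜 E]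

theorem starProjection_orthogonal_eq_of_sub_mem {K : Submodule 𝕜 E} [K.HasOrthogonalProjection]
    {x p : E} (hp : p ∈ Kᗮ) (hx : x - p ∈ K) : Kᗮ.starProjection x = p :=
  eq_starProjection_of_mem_orthogonal hp (K.le_orthogonal_orthogonal hx)

theorem dist_le_dist_add_norm_starProjection_sub_mul {K K' : Submodule 𝕜 E}
    [K.HasOrthogonalProjection] [K'.HasOrthogonalProjection] {x x' p p' : E}
    (hp : p ∈ Kᗮ) (hx : x - p ∈ K) (hp' : p' ∈ K'ᗮ) (hx' : x' - p' ∈ K') :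
    dist p p' ≤ dist x x' + ‖K.starProjection - K'.starProjection‖ * ‖x'‖ := by
  have hdecomp : p - p' =
      Kᗮ.starProjection (x - x') - (K.starProjection - K'.starProjection) x' := by
    rw [← starProjection_orthogonal_eq_of_sub_mem hp hx,
      ← starProjection_orthogonal_eq_of_sub_mem hp' hx']
    simp only [starProjection_orthogonal_val, map_sub, sub_apply]
    abel
  calc dist p p'
      ≤ ‖Kᗮ.starProjection (x - x')‖ + ‖(K.starProjection - K'.starProjection) x'‖ := by
        rw [dist_eq_norm, hdecomp]
        exact norm_sub_le _ _
    _ ≤ dist x x' + ‖K.starProjection - K'.starProjection‖ * ‖x'‖ := by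
        rw [dist_eq_norm]
        gcongr
        · exact norm_starProjection_apply_le _ _
        · exact ContinuousLinearMap.le_opNorm _ _

end Submodule

theorem AffLine.dist_pt_le {d : ℕ} (L L' : AffLine d) {x x' : EuclideanSpace ℝ (Fin d)}
    (hx : x ∈ L.carrier) (hx' : x' ∈ L'.carrier) :
    dist L.pt L'.pt ≤ dist x x' + ‖projL L.dir - projL L'.dir‖ * ‖x'‖ :=
  Submodule.dist_le_dist_add_norm_starProjection_sub_mul L.pt_mem hx L'.pt_mem hx'

theorem lines_close_dir_far_trans_separated_general (d : ℕ) :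
    ∃ δ₀ > (0 : ℝ), ∀ δ ∈ Set.Ioo (0 : ℝ) δ₀, ∀ L L' : AffLine d,
      ‖projL L.dir - projL L'.dir‖ ≤ δ → 4 * δ ≤ dist L.pt L'.pt →
      ∀ x ∈ L.carrier ∩ Metric.closedBall (0 : EuclideanSpace ℝ (Fin d)) 1,
      ∀ x' ∈ L'.carrier ∩ Metric.closedBall (0 : EuclideanSpace ℝ (Fin d)) 1,
        δ ≤ dist x x' := by
  refine ⟨1, one_pos, ?_⟩
  rintro δ ⟨hδ, -⟩ L L' hproj hpt x ⟨hxL, -⟩ x' ⟨hxL', hx'⟩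
  have hsmall : ‖projL L.dir - projL L'.dir‖ * ‖x'‖ ≤ δ :=
    (mul_le_of_le_one_right (norm_nonneg _) (mem_closedBall_zero_iff.mp hx')).trans hproj
  linarith [L.dist_pt_le L' hxL hxL']

/-- **Geometric separation lemma.**  There is `δ₀ > 0`, depending only on `d`, such that for
all `δ ∈ (0, δ₀)`: if two lines `L = V + a` and `L' = V' + a'` in standard form satisfy
`‖P_V - P_{V'}‖ ≤ δ` and `|a - a'| ≥ 4δ`, then any `x ∈ L ∩ B(0,1)` and `x' ∈ L' ∩ B(0,1)`
satisfy `|x - x'| ≥ δ`. -/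
theorem lines_close_dir_far_trans_separated (d : ℕ) (hd : 2 ≤ d) :
    ∃ δ₀ > (0 : ℝ), ∀ δ ∈ Set.Ioo (0 : ℝ) δ₀, ∀ L L' : AffLine d,
      ‖projL L.dir - projL L'.dir‖ ≤ δ → 4 * δ ≤ dist L.pt L'.pt →
      ∀ x ∈ L.carrier ∩ Metric.closedBall (0 : EuclideanSpace ℝ (Fin d)) 1,
      ∀ x' ∈ L'.carrier ∩ Metric.closedBall (0 : EuclideanSpace ℝ (Fin d)) 1,
        δ ≤ dist x x' :=
  lines_close_dir_far_trans_separated_general d
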